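/- Jacobian suboptimality rate for the Chebyshev method (Theorem 3.5): Under the stated setting with residual polynomial P = Cₜ (the shifted, normalized Chebyshev polynomial) and integer t ≥ 1, writing κ = ℓ/L and ξ = (1-√κ)/(1+√κ), one has ‖deriv xₜ θ - deriv x⋆ θ‖ ≤ (2/(ξ^t + ξ^(-t))) · (|2t²/(1-κ) - 1| · ‖deriv x₀ θ - deriv x⋆ θ‖ + (2t²/(L-ℓ))·G). -/

import Mathlib

/-!
Differentiating the optimality condition `H x⋆ = -b` and the iterate
`xₜ = x⋆ + P(H) (x₀ - x⋆)`, and using that `H` commutes with `H'` (so that the derivative of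
`P(H)` is `P'(H) H'`), gives
`xₜ' - x⋆' = P'(H) w + (P - X P')(H) (x₀' - x⋆')` with `w = H' x₀ + H x₀' + b'`, `‖w‖ = G`.
Both matrices are polynomials in the symmetric matrix `H`, whose spectrum lies in `[ℓ, L]`, so
their operator norms are bounded by the suprema of the scalar polynomials over `[ℓ, L]`.
There `u = m(λ) ∈ [-1, 1]`, and Markov's inequality `|Tₜ'(u)| ≤ t²` together with
`|Tₜ(u) - u Tₜ'(u)| ≤ |t² - 1|` bounds them by `2t² / ((L - ℓ) |τ|)` and
`|2t² / (1 - κ) - 1| / |τ|`, where `τ = Tₜ(m 0)`. Finally `m 0 = -(ξ + ξ⁻¹) / 2`, so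
`|τ| = (ξᵗ + ξ⁻ᵗ) / 2`.
-/

open Polynomial Matrix

attribute [local instance] Matrix.normedAddCommGroup Matrix.normedSpace

/-- The Euclidean norm on `Fin d → ℝ`. -/
noncomputable def euclNorm {d : ℕ} (v : Fin d → ℝ) : ℝ := Real.sqrt (∑ i, v i ^ 2)

namespace Polynomial.Chebyshev

theorem T_derivative_eval_one (R : Type*) [CommRing R] (n : ℤ) :
    (derivative (T R n)).eval 1 = n ^ 2 := by
  simp [T_derivative_eq_U, U_eval_one]
  ring

theorem abs_eval_derivative_T_real_le (n : ℤ) {x : ℝ} (hx : |x| ≤ 1) :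
    |(derivative (T ℝ n)).eval x| ≤ n ^ 2 := by
  simpa [T_derivative_eval_one] using abs_iterate_derivative_T_real_le n 1 hx

/-- `(n + 1) Uₙ = Tₙ₊₁'`, so this is Markov's inequality for `Tₙ₊₁`. -/
theorem abs_eval_U_real_le (n : ℤ) {x : ℝ} (hx : |x| ≤ 1) :
    |(U ℝ n).eval x| ≤ |(n : ℝ) + 1| := by
  rcases eq_or_ne ((n : ℝ) + 1) 0 with hn | hn
  · obtain rfl : n = -1 := by exact_mod_cast eq_neg_of_add_eq_zero_left hn
    simp [U_neg_one]
  have hT := abs_eval_derivative_T_real_le (n + 1) hx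
  rw [T_derivative_eq_U, add_sub_cancel_right, eval_mul, eval_intCast, abs_mul, ← sq_abs, sq]
    at hT
  push_cast at hT
  exact le_of_mul_le_mul_left hT (abs_pos.mpr hn)

/-- `2 (Tₙ - X Tₙ') = (1 - n) Uₙ - (n + 1) Uₙ₋₂`. -/
theorem abs_eval_T_real_sub_mul_derivative_le (n : ℤ) {x : ℝ} (hx : |x| ≤ 1) :
    |(T ℝ n).eval x - x * (derivative (T ℝ n)).eval x| ≤ |(n : ℝ) ^ 2 - 1| := by
  have hrec := congrArg (eval x) (U_eq ℝ n)
  have hT := congrArg (eval x) (T_eq_U_sub_X_mul_U ℝ n)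
  simp only [eval_sub, eval_mul, eval_ofNat, eval_X] at hrec hT
  rw [T_derivative_eq_U, eval_mul, eval_intCast, hT]
  have hU := abs_eval_U_real_le n hx
  have hU₂ := abs_eval_U_real_le (n - 2) hx
  push_cast at hU₂
  calc _ = |(1 - n) / 2 * (U ℝ n).eval x - (n + 1) / 2 * (U ℝ (n - 2)).eval x| := by
        congr 1
        linear_combination ((n : ℝ) + 1) / 2 * hrec
    _ ≤ |1 - (n : ℝ)| / 2 * |(n : ℝ) + 1| + |(n : ℝ) + 1| / 2 * |(n : ℝ) - 2 + 1| := by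
        refine (abs_sub _ _).trans (add_le_add ?_ ?_) <;>
          rw [abs_mul, abs_div, abs_two] <;> gcongr
    _ = |(n : ℝ) ^ 2 - 1| := by
        rw [show (n : ℝ) - 2 + 1 = n - 1 by ring, abs_sub_comm 1,
          show (n : ℝ) ^ 2 - 1 = (n - 1) * (n + 1) by ring, abs_mul]
        ring

theorem T_eval_add_inv_div_two {R : Type*} [Field R] [NeZero (2 : R)] {y : R} (hy : y ≠ 0)
    (n : ℕ) : (T R n).eval ((y + y⁻¹) / 2) = (y ^ n + y⁻¹ ^ n) / 2 := by
  induction n using Nat.twoStepInduction with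
  | zero => simp [one_add_one_eq_two, div_self (two_ne_zero (α := R))]
  | one => simp
  | more k ih₁ ih₂ =>
    push_cast at ih₂ ⊢
    rw [T_add_two]
    simp only [eval_sub, eval_mul, eval_ofNat, eval_X, ih₁, ih₂, inv_pow]
    field_simp
    ring

end Polynomial.Chebyshev

/-- The paper's `Cₜ(λ) = Tₜ(m λ) / Tₜ(m 0)`, with `m λ = (2λ - L - ℓ) / (L - ℓ)`. -/
noncomputable def chebyshevResidual (ℓ L : ℝ) (n : ℤ) : ℝ[X] :=
  C (((Chebyshev.T ℝ n).eval (-(L + ℓ) / (L - ℓ)))⁻¹) *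
    (Chebyshev.T ℝ n).comp (C (2 / (L - ℓ)) * X - C ((L + ℓ) / (L - ℓ)))

section ChebyshevResidual

variable {ℓ L ξ x : ℝ}

theorem abs_two_div_mul_sub_le_one (hℓL : ℓ < L) (hx : x ∈ Set.Icc ℓ L) :
    |2 / (L - ℓ) * x - (L + ℓ) / (L - ℓ)| ≤ 1 := by
  have hLℓ : 0 < L - ℓ := sub_pos.mpr hℓL
  rw [show 2 / (L - ℓ) * x - (L + ℓ) / (L - ℓ) = (2 * x - (L + ℓ)) / (L - ℓ) by ring, abs_div,
    abs_of_pos hLℓ, div_le_one hLℓ, abs_le]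
  constructor <;> linarith [hx.1, hx.2]

theorem abs_eval_derivative_chebyshevResidual_le (hℓL : ℓ < L) (n : ℤ) (hx : x ∈ Set.Icc ℓ L) :
    |(derivative (chebyshevResidual ℓ L n)).eval x| ≤
      |(Chebyshev.T ℝ n).eval (-(L + ℓ) / (L - ℓ))|⁻¹ * (2 * n ^ 2 / (L - ℓ)) := by
  have hLℓ : 0 < L - ℓ := sub_pos.mpr hℓL
  simp only [chebyshevResidual, derivative_comp, eval_mul, eval_C, eval_comp, derivative_sub,
    derivative_C, derivative_X, derivative_mul, zero_mul, zero_add, mul_one, sub_zero, eval_sub,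
    eval_X, abs_mul, abs_inv]
  have hT := Chebyshev.abs_eval_derivative_T_real_le n (abs_two_div_mul_sub_le_one hℓL hx)
  rw [abs_of_pos (by positivity : 0 < 2 / (L - ℓ))]
  calc _ ≤ |(Chebyshev.T ℝ n).eval (-(L + ℓ) / (L - ℓ))|⁻¹ * (2 / (L - ℓ) * n ^ 2) := by
        gcongr
    _ = _ := by ring

theorem abs_eval_sub_X_mul_derivative_chebyshevResidual_le (hℓ : 0 ≤ ℓ) (hℓL : ℓ < L) (n : ℤ)
    (hx : x ∈ Set.Icc ℓ L) :
    |(chebyshevResidual ℓ L n - X * derivative (chebyshevResidual ℓ L n)).eval x| ≤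
      |(Chebyshev.T ℝ n).eval (-(L + ℓ) / (L - ℓ))|⁻¹ *
        (|(n : ℝ) ^ 2 - 1| + (L + ℓ) / (L - ℓ) * n ^ 2) := by
  have hLℓ : 0 < L - ℓ := sub_pos.mpr hℓL
  set u := 2 / (L - ℓ) * x - (L + ℓ) / (L - ℓ)
  have hu := abs_two_div_mul_sub_le_one hℓL hx
  have hxu : 2 / (L - ℓ) * x = u + (L + ℓ) / (L - ℓ) := by ring
  simp only [chebyshevResidual, derivative_comp, eval_mul, eval_C, eval_comp, derivative_sub,
    derivative_C, derivative_X, derivative_mul, zero_mul, zero_add, mul_one, sub_zero, eval_sub,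
    eval_X]
  set τ := (Chebyshev.T ℝ n).eval (-(L + ℓ) / (L - ℓ))
  set T' := (derivative (Chebyshev.T ℝ n)).eval u
  have hT₁ := Chebyshev.abs_eval_T_real_sub_mul_derivative_le n hu
  have hT₂ := Chebyshev.abs_eval_derivative_T_real_le n hu
  have hc : 0 ≤ (L + ℓ) / (L - ℓ) := div_nonneg (by linarith) hLℓ.le
  calc _ = |τ|⁻¹ * |((Chebyshev.T ℝ n).eval u - u * T') + (-((L + ℓ) / (L - ℓ) * T'))| := by
        rw [← abs_inv, ← abs_mul]
        congr 1
        linear_combination (-τ⁻¹ * T') * hxu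
    _ ≤ |τ|⁻¹ * (|(n : ℝ) ^ 2 - 1| + (L + ℓ) / (L - ℓ) * n ^ 2) := by
        grw [abs_add_le, abs_neg, abs_mul, abs_of_nonneg hc, hT₁, hT₂]

theorem add_div_sub_eq_add_inv_div_two (hℓ : 0 ≤ ℓ) (hℓL : ℓ < L)
    (hξ : ξ = (1 - √(ℓ / L)) / (1 + √(ℓ / L))) : (L + ℓ) / (L - ℓ) = (ξ + ξ⁻¹) / 2 := by
  have hL : 0 < L := hℓ.trans_lt hℓL
  have hs₀ : 0 ≤ √(ℓ / L) := Real.sqrt_nonneg _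
  have hs₁ : √(ℓ / L) < 1 := by
    simpa using Real.sqrt_lt_sqrt (div_nonneg hℓ hL.le) ((div_lt_one hL).mpr hℓL)
  have hℓs : ℓ = L * √(ℓ / L) ^ 2 := by
    rw [Real.sq_sqrt (div_nonneg hℓ hL.le)]
    field_simp
  generalize √(ℓ / L) = s at hs₀ hs₁ hℓs hξ
  subst hℓs hξ
  have : 1 - s ≠ 0 := by linarith
  have : 1 - s ^ 2 ≠ 0 := by nlinarith
  have : L - L * s ^ 2 ≠ 0 := by nlinarith
  field_simp
  ring

theorem abs_eval_T_real_neg_add_div_sub (hℓ : 0 ≤ ℓ) (hℓL : ℓ < L)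
    (hξ : ξ = (1 - √(ℓ / L)) / (1 + √(ℓ / L))) (n : ℕ) :
    |(Chebyshev.T ℝ n).eval (-(L + ℓ) / (L - ℓ))| = (ξ ^ n + ξ ^ (-(n : ℤ))) / 2 := by
  have hs₁ : √(ℓ / L) < 1 := by
    have hL : 0 < L := hℓ.trans_lt hℓL
    simpa using Real.sqrt_lt_sqrt (div_nonneg hℓ hL.le) ((div_lt_one hL).mpr hℓL)
  have hξ₀ : 0 < ξ := hξ ▸ div_pos (by linarith) (by positivity)
  rw [neg_div, add_div_sub_eq_add_inv_div_two hℓ hℓL hξ, Chebyshev.T_eval_neg,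
    Chebyshev.T_eval_add_inv_div_two hξ₀.ne', abs_mul, _root_.zpow_neg, zpow_natCast, ← inv_pow]
  simp only [Int.cast_abs.symm, Int.abs_negOnePow, Int.cast_one, one_mul]
  exact abs_of_pos (by positivity)

theorem abs_sq_sub_one_add_div_sub_mul_sq (hℓ : 0 ≤ ℓ) (hℓL : ℓ < L) (n : ℤ) :
    |(n : ℝ) ^ 2 - 1| + (L + ℓ) / (L - ℓ) * n ^ 2 = |2 * n ^ 2 / (1 - ℓ / L) - 1| := by
  have hL : 0 < L := hℓ.trans_lt hℓL
  have hLℓ : 0 < L - ℓ := sub_pos.mpr hℓL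
  have hc : 0 ≤ (L + ℓ) / (L - ℓ) := div_nonneg (by linarith) hLℓ.le
  rw [show 2 * (n : ℝ) ^ 2 / (1 - ℓ / L) = (1 + (L + ℓ) / (L - ℓ)) * n ^ 2 by
    field_simp [hL.ne', hLℓ.ne']; ring]
  rcases eq_or_ne n 0 with rfl | hn
  · simp
  have h1 : (1 : ℝ) ≤ (n : ℝ) ^ 2 := by
    rw [one_le_sq_iff_one_le_abs, ← Int.cast_abs]
    exact_mod_cast Int.one_le_abs hn
  rw [abs_of_nonneg (by linarith), abs_of_nonneg (by nlinarith)]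
  ring

end ChebyshevResidual

section MatrixCalculus

variable {𝕜 : Type*} [NontriviallyNormedField 𝕜] {m n p : Type*} {x : 𝕜}

theorem hasDerivAt_matrix [Fintype n] {F : 𝕜 → Matrix m n 𝕜} {F' : Matrix m n 𝕜} :
    HasDerivAt F F' x ↔ ∀ i j, HasDerivAt (fun y => F y i j) (F' i j) x :=
  hasDerivAt_pi.trans (forall_congr' fun _ => hasDerivAt_pi)

theorem HasDerivAt.matrix_mul [Fintype m] [Fintype n] [Fintype p] {F : 𝕜 → Matrix m n 𝕜}
    {G : 𝕜 → Matrix n p 𝕜} {F' : Matrix m n 𝕜} {G' : Matrix n p 𝕜} (hF : HasDerivAt F F' x)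
    (hG : HasDerivAt G G' x) : HasDerivAt (fun y => F y * G y) (F' * G x + F x * G') x := by
  rw [hasDerivAt_matrix] at hF hG ⊢
  intro i j
  simpa [Matrix.mul_apply, Finset.sum_add_distrib] using
    HasDerivAt.fun_sum (u := Finset.univ) fun k _ => (hF i k).mul (hG k j)

theorem HasDerivAt.matrix_mulVec [Fintype m] [Fintype n] {F : 𝕜 → Matrix m n 𝕜}
    {g : 𝕜 → n → 𝕜} {F' : Matrix m n 𝕜} {g' : n → 𝕜} (hF : HasDerivAt F F' x)
    (hg : HasDerivAt g g' x) : HasDerivAt (fun y => F y *ᵥ g y) (F' *ᵥ g x + F x *ᵥ g') x := by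
  rw [hasDerivAt_matrix] at hF
  rw [hasDerivAt_pi] at hg ⊢
  intro i
  simpa [Matrix.mulVec, dotProduct, Finset.sum_add_distrib] using
    HasDerivAt.fun_sum (u := Finset.univ) fun k _ => (hF i k).mul (hg k)

theorem HasDerivAt.aeval_matrix [Fintype n] [DecidableEq n] {F : 𝕜 → Matrix n n 𝕜}
    {F' : Matrix n n 𝕜} (hF : HasDerivAt F F' x) (hc : Commute (F x) F') (q : 𝕜[X]) :
    HasDerivAt (fun y => aeval (F y) q) (aeval (F x) (derivative q) * F') x := by
  induction q using Polynomial.induction_on with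
  | C a =>
    simp only [aeval_C, derivative_C, map_zero, zero_mul]
    exact hasDerivAt_const x _
  | add q r hq hr =>
    simp only [map_add, add_mul]
    exact hq.add hr
  | monomial k a ih =>
    rw [pow_succ, ← mul_assoc]
    generalize C a * X ^ k = q at ih ⊢
    have h := ih.matrix_mul hF
    simp only [map_mul, aeval_X, derivative_mul, derivative_X, mul_one, map_add, add_mul] at h ⊢
    convert h using 2
    rw [mul_assoc, mul_assoc, hc.eq]

theorem DifferentiableAt.matrix_det [Fintype n] [DecidableEq n] {F : 𝕜 → Matrix n n 𝕜}
    (hF : DifferentiableAt 𝕜 F x) : DifferentiableAt 𝕜 (fun y => (F y).det) x := by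
  have hFij i j : DifferentiableAt 𝕜 (fun y => F y i j) x :=
    differentiableAt_pi.1 (differentiableAt_pi.1 hF i) j
  simp only [Matrix.det_apply]
  exact .fun_sum fun σ _ =>
    (DifferentiableAt.fun_finsetProd (u := Finset.univ) fun i _ => hFij (σ i) i).const_smul _

theorem DifferentiableAt.matrix_updateCol [Fintype n] [DecidableEq n] {F : 𝕜 → Matrix m n 𝕜}
    {c : 𝕜 → m → 𝕜} (hF : DifferentiableAt 𝕜 F x) (hc : DifferentiableAt 𝕜 c x) (j : n) :
    DifferentiableAt 𝕜 (fun y => (F y).updateCol j (c y)) x := by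
  refine differentiableAt_pi.2 fun i => differentiableAt_pi.2 fun k => ?_
  simp only [Matrix.updateCol_apply]
  split_ifs
  · exact differentiableAt_pi.1 hc i
  · exact differentiableAt_pi.1 (differentiableAt_pi.1 hF i) k

theorem DifferentiableAt.matrix_inv_mulVec [Fintype n] [DecidableEq n] {F : 𝕜 → Matrix n n 𝕜}
    {b : 𝕜 → n → 𝕜} (hF : DifferentiableAt 𝕜 F x) (hb : DifferentiableAt 𝕜 b x)
    (hdet : (F x).det ≠ 0) : DifferentiableAt 𝕜 (fun y => (F y)⁻¹ *ᵥ b y) x := by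
  have hcramer y : (F y)⁻¹ *ᵥ b y = (F y).det⁻¹ • Matrix.cramer (F y) (b y) := by
    rw [Matrix.inv_def, Ring.inverse_eq_inv', Matrix.smul_mulVec,
      Matrix.cramer_eq_adjugate_mulVec]
  simp only [hcramer]
  refine (hF.matrix_det.inv hdet).smul (differentiableAt_pi.2 fun i => ?_)
  simpa only [Matrix.cramer_apply] using (hF.matrix_updateCol hb i).matrix_det

theorem HasDerivAt.matrix_inv_mulVec [Fintype n] [DecidableEq n] {F : 𝕜 → Matrix n n 𝕜}
    {F' : Matrix n n 𝕜} {b : 𝕜 → n → 𝕜} {b' : n → 𝕜} (hF : HasDerivAt F F' x)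
    (hb : HasDerivAt b b' x) (hdet : (F x).det ≠ 0) :
    HasDerivAt (fun y => (F y)⁻¹ *ᵥ b y) ((F x)⁻¹ *ᵥ (b' - F' *ᵥ ((F x)⁻¹ *ᵥ b x))) x := by
  set u := fun y => (F y)⁻¹ *ᵥ b y
  have hu : HasDerivAt u (_root_.deriv u x) x :=
    (hF.differentiableAt.matrix_inv_mulVec hb.differentiableAt hdet).hasDerivAt
  have hFu : F' *ᵥ u x + F x *ᵥ _root_.deriv u x = b' := by
    refine (hF.matrix_mulVec hu).unique (hb.congr_of_eventuallyEq ?_)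
    filter_upwards [hF.differentiableAt.matrix_det.continuousAt.eventually_ne hdet] with y hy
    simp [u, Matrix.mulVec_mulVec, Matrix.mul_nonsing_inv _ (isUnit_iff_ne_zero.mpr hy)]
  convert hu using 1
  rw [← hFu, add_sub_cancel_left, Matrix.mulVec_mulVec,
    Matrix.nonsing_inv_mul _ (isUnit_iff_ne_zero.mpr hdet), Matrix.one_mulVec]

end MatrixCalculus

section Spectral

variable {n : Type*} [Fintype n] [DecidableEq n] {A : Matrix n n ℝ}

open scoped MatrixOrder in
theorem Matrix.IsHermitian.spectrum_subset_Icc (hA : A.IsHermitian) {a b : ℝ}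
    (ha : (A - a • 1).PosSemidef) (hb : (b • 1 - A).PosSemidef) :
    spectrum ℝ A ⊆ Set.Icc a b := by
  intro x hx
  refine ⟨(algebraMap_le_iff_le_spectrum hA.isSelfAdjoint).mp ?_ x hx,
    (le_algebraMap_iff_spectrum_le hA.isSelfAdjoint).mp ?_ x hx⟩
  · rwa [Matrix.le_iff, Algebra.algebraMap_eq_smul_one]
  · rwa [Matrix.le_iff, Algebra.algebraMap_eq_smul_one]

open scoped Matrix.Norms.L2Operator in
theorem Matrix.IsHermitian.norm_aeval_mulVec_le (hA : A.IsHermitian) (q : ℝ[X]) {M : ℝ}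
    (hM : ∀ x ∈ spectrum ℝ A, |q.eval x| ≤ M) (v : n → ℝ) :
    ‖WithLp.toLp 2 (aeval A q *ᵥ v)‖ ≤ M * ‖WithLp.toLp 2 v‖ := by
  rcases isEmpty_or_nonempty n with _ | ⟨⟨i⟩⟩
  · simp [Subsingleton.elim v 0]
  have hq : ‖aeval A q‖ ≤ M := by
    rw [← cfc_polynomial q A hA.isSelfAdjoint]
    exact norm_cfc_le ((abs_nonneg _).trans (hM _ (hA.eigenvalues_mem_spectrum_real i))) hM
  calc _ ≤ ‖aeval A q‖ * ‖WithLp.toLp 2 v‖ := (aeval A q).l2_opNorm_mulVec (WithLp.toLp 2 v)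
    _ ≤ M * ‖WithLp.toLp 2 v‖ := by gcongr

end Spectral

theorem euclNorm_eq_norm_toLp {d : ℕ} (v : Fin d → ℝ) : euclNorm v = ‖WithLp.toLp 2 v‖ := by
  simp [euclNorm, EuclideanSpace.norm_eq]

theorem aeval_derivative_mul_mulVec_add_aeval_mulVec {n R : Type*} [Fintype n] [DecidableEq n]
    [CommRing R] (q : R[X]) {A A' : Matrix n n R} {x₀ x₀' xs xs' b' : n → R}
    (hxs : A' *ᵥ xs + A *ᵥ xs' = -b') :
    (aeval A (derivative q) * A') *ᵥ (x₀ - xs) + aeval A q *ᵥ (x₀' - xs') =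
      aeval A (derivative q) *ᵥ (A' *ᵥ x₀ + A *ᵥ x₀' + b') +
        aeval A (q - X * derivative q) *ᵥ (x₀' - xs') := by
  rw [← neg_neg b', ← hxs, mul_comm X]
  simp only [map_sub, map_mul, aeval_X, Matrix.sub_mulVec, ← Matrix.mulVec_mulVec,
    Matrix.mulVec_add, Matrix.mulVec_sub, Matrix.mulVec_neg]
  abel

theorem deriv_iterate_sub_deriv_minimizer {𝕜 n : Type*} [NontriviallyNormedField 𝕜] [Fintype n]
    [DecidableEq n] {θ : 𝕜} {H : 𝕜 → Matrix n n 𝕜} {H' : Matrix n n 𝕜}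
    {b x₀ xs xt : 𝕜 → n → 𝕜} {b' x₀' : n → 𝕜} {q : 𝕜[X]}
    (hxs : ∀ y, xs y = -((H y)⁻¹ *ᵥ b y))
    (hxt : ∀ y, xt y = xs y + aeval (H y) q *ᵥ (x₀ y - xs y))
    (hH : HasDerivAt H H' θ) (hb : HasDerivAt b b' θ) (hx₀ : HasDerivAt x₀ x₀' θ)
    (hdet : (H θ).det ≠ 0) (hcomm : Commute (H θ) H') :
    deriv xt θ - deriv xs θ =
      aeval (H θ) (derivative q) *ᵥ (H' *ᵥ x₀ θ + H θ *ᵥ x₀' + b') +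
        aeval (H θ) (q - X * derivative q) *ᵥ (x₀' - deriv xs θ) := by
  have hxs' : HasDerivAt xs (-((H θ)⁻¹ *ᵥ (b' - H' *ᵥ ((H θ)⁻¹ *ᵥ b θ)))) θ := by
    rw [funext hxs]
    exact (hH.matrix_inv_mulVec hb hdet).neg
  have hopt : H' *ᵥ xs θ + H θ *ᵥ deriv xs θ = -b' := by
    rw [hxs'.deriv, hxs, Matrix.mulVec_neg, Matrix.mulVec_neg, Matrix.mulVec_mulVec _ (H θ),
      Matrix.mul_nonsing_inv _ (isUnit_iff_ne_zero.mpr hdet), Matrix.one_mulVec]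
    abel
  have hxt' : HasDerivAt xt (deriv xs θ + ((aeval (H θ) (derivative q) * H') *ᵥ (x₀ θ - xs θ) +
      aeval (H θ) q *ᵥ (x₀' - deriv xs θ))) θ := by
    have hdxs : HasDerivAt xs (deriv xs θ) θ := hxs'.differentiableAt.hasDerivAt
    rw [funext hxt]
    exact hdxs.add ((hH.aeval_matrix hcomm q).matrix_mulVec (hx₀.sub hdxs))
  rw [hxt'.deriv, add_sub_cancel_left, aeval_derivative_mul_mulVec_add_aeval_mulVec q hopt]

theorem jacobian_rate_chebyshev_general {d : ℕ} (θ : ℝ)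
    (H : ℝ → Matrix (Fin d) (Fin d) ℝ) (b x₀ : ℝ → (Fin d → ℝ))
    (hH : DifferentiableAt ℝ H θ) (hb : DifferentiableAt ℝ b θ)
    (hx₀ : DifferentiableAt ℝ x₀ θ)
    (ℓ L : ℝ) (hℓ : 0 < ℓ) (hℓL : ℓ < L)
    (hsym : (H θ).IsSymm)
    (hlower : (H θ - ℓ • 1).PosSemidef) (hupper : (L • 1 - H θ).PosSemidef)
    (hcomm : H θ * deriv H θ = deriv H θ * H θ)
    (t : ℕ)
    (P : Polynomial ℝ)
    (hP : P = Polynomial.C (((Polynomial.Chebyshev.T ℝ (t : ℤ)).eval (-(L + ℓ) / (L - ℓ)))⁻¹) *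
        (Polynomial.Chebyshev.T ℝ (t : ℤ)).comp
          (Polynomial.C (2 / (L - ℓ)) * Polynomial.X - Polynomial.C ((L + ℓ) / (L - ℓ))))
    (xstar : ℝ → (Fin d → ℝ))
    (hxstar : ∀ θ' : ℝ, xstar θ' = -((H θ')⁻¹.mulVec (b θ')))
    (xt : ℝ → (Fin d → ℝ))
    (hxt : ∀ θ' : ℝ, xt θ' =
      xstar θ' + ((Polynomial.aeval (H θ')) P).mulVec (x₀ θ' - xstar θ'))
    (G : ℝ)
    (hG : G = euclNorm ((deriv H θ).mulVec (x₀ θ) + (H θ).mulVec (deriv x₀ θ) + deriv b θ))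
    (κ ξ : ℝ) (hκ : κ = ℓ / L) (hξ : ξ = (1 - Real.sqrt κ) / (1 + Real.sqrt κ)) :
    euclNorm (deriv xt θ - deriv xstar θ) ≤
      (2 / (ξ ^ t + ξ ^ (-(t : ℤ)))) *
        (|2 * (t : ℝ) ^ 2 / (1 - κ) - 1| * euclNorm (deriv x₀ θ - deriv xstar θ)
          + (2 * (t : ℝ) ^ 2 / (L - ℓ)) * G) := by
  replace hP : P = chebyshevResidual ℓ L t := hP
  subst hκ hG
  have hA : (H θ).IsHermitian := by
    rwa [Matrix.IsHermitian, Matrix.conjTranspose_eq_transpose_of_trivial]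
  have hσ := hA.spectrum_subset_Icc hlower hupper
  have hdet : (H θ).det ≠ 0 := by
    rw [← isUnit_iff_ne_zero, ← Matrix.isUnit_iff_isUnit_det, ← spectrum.zero_notMem_iff ℝ]
    exact fun h => (hσ h).1.not_gt hℓ
  rw [deriv_iterate_sub_deriv_minimizer hxstar hxt hH.hasDerivAt hb.hasDerivAt hx₀.hasDerivAt
    hdet hcomm]
  have h₁ := hA.norm_aeval_mulVec_le _
    (fun x hx => hP ▸ abs_eval_derivative_chebyshevResidual_le hℓL t (hσ hx))
    (deriv H θ *ᵥ x₀ θ + H θ *ᵥ deriv x₀ θ + deriv b θ)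
  have h₂ := hA.norm_aeval_mulVec_le _
    (fun x hx => hP ▸ abs_eval_sub_X_mul_derivative_chebyshevResidual_le hℓ.le hℓL t (hσ hx))
    (deriv x₀ θ - deriv xstar θ)
  rw [abs_eval_T_real_neg_add_div_sub hℓ.le hℓL hξ t, inv_div] at h₁ h₂
  rw [abs_sq_sub_one_add_div_sub_mul_sq hℓ.le hℓL] at h₂
  simp only [euclNorm_eq_norm_toLp, WithLp.toLp_add, Int.cast_natCast] at h₁ h₂ ⊢
  calc _ ≤ _ := norm_add_le _ _
    _ ≤ _ := add_le_add h₁ h₂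
    _ = _ := by ring

/-- Jacobian suboptimality rate for the Chebyshev method (Theorem 3.5). -/
theorem jacobian_rate_chebyshev {d : ℕ} (hd : 1 ≤ d) (θ : ℝ)
    (H : ℝ → Matrix (Fin d) (Fin d) ℝ) (b x₀ : ℝ → (Fin d → ℝ))
    (hH : DifferentiableAt ℝ H θ) (hb : DifferentiableAt ℝ b θ)
    (hx₀ : DifferentiableAt ℝ x₀ θ)
    (ℓ L : ℝ) (hℓ : 0 < ℓ) (hℓL : ℓ < L)
    (hsym : (H θ).IsSymm)
    (hlower : (H θ - ℓ • 1).PosSemidef) (hupper : (L • 1 - H θ).PosSemidef)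
    (hcomm : H θ * deriv H θ = deriv H θ * H θ)
    (t : ℕ) (ht : 1 ≤ t)
    (P : Polynomial ℝ)
    (hP : P = Polynomial.C (((Polynomial.Chebyshev.T ℝ (t : ℤ)).eval (-(L + ℓ) / (L - ℓ)))⁻¹) *
        (Polynomial.Chebyshev.T ℝ (t : ℤ)).comp
          (Polynomial.C (2 / (L - ℓ)) * Polynomial.X - Polynomial.C ((L + ℓ) / (L - ℓ))))
    (xstar : ℝ → (Fin d → ℝ))
    (hxstar : ∀ θ' : ℝ, xstar θ' = -((H θ')⁻¹.mulVec (b θ')))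
    (xt : ℝ → (Fin d → ℝ))
    (hxt : ∀ θ' : ℝ, xt θ' =
      xstar θ' + ((Polynomial.aeval (H θ')) P).mulVec (x₀ θ' - xstar θ'))
    (G : ℝ)
    (hG : G = euclNorm ((deriv H θ).mulVec (x₀ θ) + (H θ).mulVec (deriv x₀ θ) + deriv b θ))
    (κ ξ : ℝ) (hκ : κ = ℓ / L) (hξ : ξ = (1 - Real.sqrt κ) / (1 + Real.sqrt κ)) :
    euclNorm (deriv xt θ - deriv xstar θ) ≤
      (2 / (ξ ^ t + ξ ^ (-(t : ℤ)))) *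
        (|2 * (t : ℝ) ^ 2 / (1 - κ) - 1| * euclNorm (deriv x₀ θ - deriv xstar θ)
          + (2 * (t : ℝ) ^ 2 / (L - ℓ)) * G) :=
  jacobian_rate_chebyshev_general θ H b x₀ hH hb hx₀ ℓ L hℓ hℓL hsym hlower hupper hcomm t P hP
    xstar hxstar xt hxt G hG κ ξ hκ hξ
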